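/- arXiv:2501.06969 — 2 statements merged into one kernel-verified Lean document; each statement's English description precedes it below -/
import Mathlib

section
/- Let Y = m̄(T) + η(S) + ε with E[ε | T, S] = 0, let 𝒮(t) denote the support of the conditional density p_{S|T}(·|t), and let K be a symmetric kernel supported on [-1,1] with ∫K = 1. Assume m̄ is C² with bounded derivatives and that the Lebesgue measure of the symmetric difference 𝒮(t+uh) △ 𝒮(t) tends to 0 as h → 0 for each u. Then the oracle IPW functional E[ Y·K((T−t)/h) / (h·p_{T|S}(T|S)) ] converges as h → 0 to m̄(t)·ρ(t) + ω(t), where ρ(t) = P(S ∈ 𝒮(t)) and ω(t) = E[η(S)·1{S ∈ 𝒮(t)}]. In particular, when ρ(t) < 1 or ω(t) ≠ E[η(S)], the IPW estimator of m(t) is inconsistent. -/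
open MeasureTheory Filter

open scoped symmDiff Topology

/-!
Where `p_{T|S}(t₁|s) p_S(s) > 0` the inverse weight cancels the density exactly, and elsewhere
the integrand vanishes (in Lean too, since `x / 0 = 0`). Substituting `t₁ = t + u h`, the IPW
functional becomes `∫ K(u) ∫_{𝒮(t+uh)} (m₀(t+uh) + η(s)) p_S(s) ds du`. For each `u` the
inner integral tends to `∫_{𝒮(t)} (m₀(t) + η) p_S`, since integrals of a fixed integrable
function over `𝒮(t+uh)` and over `𝒮(t)` differ by at most its integral over the symmetric
difference. Dominated convergence in `u`, with `|K|` times a constant as dominating function,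
and `∫ K = 1` give the limit `m₀(t) ρ(t) + ω(t)`.
-/

theorem div_mul_mul_eq_ite {p q : ℝ} (hp : 0 ≤ p) (hq : 0 ≤ q) (y : ℝ) :
    y / p * (p * q) = if 0 < p * q then y * q else 0 := by
  split_ifs with hpq
  · rw [← mul_assoc, div_mul_cancel₀ _ (pos_of_mul_pos_left hpq hq).ne']
  · obtain h | h := mul_eq_zero.mp ((mul_nonneg hp hq).eq_of_not_lt hpq).symm <;> simp [h]

theorem integral_comp_add_mul_right {E : Type*} [NormedAddCommGroup E] [NormedSpace ℝ E]
    (φ : ℝ → E) (t h : ℝ) : ∫ u, φ (t + u * h) = |h⁻¹| • ∫ x, φ x := by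
  rw [Measure.integral_comp_mul_right (fun x => φ (t + x)), integral_add_left_eq_self]

theorem tendsto_setIntegral_of_tendsto_measure_symmDiff {α ι E : Type*} [MeasurableSpace α]
    [NormedAddCommGroup E] [NormedSpace ℝ E] {μ : Measure α} {l : Filter ι} {f : α → E}
    (hf : Integrable f μ) {s : ι → Set α} {t : Set α} (hs : ∀ i, MeasurableSet (s i))
    (ht : MeasurableSet t) (hst : Tendsto (fun i => μ (s i ∆ t)) l (𝓝 0)) :
    Tendsto (fun i => ∫ x in s i, f x ∂μ) l (𝓝 (∫ x in t, f x ∂μ)) := by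
  simp_rw [← integral_indicator (hs _), ← integral_indicator ht]
  refine tendsto_integral_of_L1' _ (hf.indicator ht).aestronglyMeasurable
    (Eventually.of_forall fun i => hf.indicator (hs i)) ?_
  simp_rw [eLpNorm_indicator_sub_indicator, eLpNorm_indicator_eq_eLpNorm_restrict
    ((hs _).symmDiff ht), eLpNorm_one_eq_lintegral_enorm]
  exact tendsto_setLIntegral_zero hf.2.ne hst

theorem tendsto_integral_smul_of_tendsto_of_bounded {α ι E : Type*} [MeasurableSpace α]
    [NormedAddCommGroup E] [NormedSpace ℝ E] [CompleteSpace E] {μ : Measure α} {l : Filter ι}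
    [l.IsCountablyGenerated] {K : α → ℝ} (hK : Integrable K μ) {g : ι → α → E} {c : E} {M : ℝ}
    (hg_meas : ∀ᶠ i in l, AEStronglyMeasurable (g i) μ)
    (hg_bdd : ∀ᶠ i in l, ∀ᵐ x ∂μ, ‖g i x‖ ≤ M)
    (hg : ∀ᵐ x ∂μ, Tendsto (fun i => g i x) l (𝓝 c)) :
    Tendsto (fun i => ∫ x, K x • g i x ∂μ) l (𝓝 ((∫ x, K x ∂μ) • c)) := by
  rw [← integral_smul_const]
  refine tendsto_integral_filter_of_dominated_convergence (fun x => ‖K x‖ * M)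
    (hg_meas.mono fun i hi => hK.aestronglyMeasurable.smul hi) ?_ (hK.norm.mul_const M)
    (hg.mono fun x hx => hx.const_smul (K x))
  filter_upwards [hg_bdd] with i hi
  filter_upwards [hi] with x hx
  rw [norm_smul]
  exact mul_le_mul_of_nonneg_left hx (norm_nonneg _)

theorem integral_kernel_div_mul_eq (K F : ℝ → ℝ) (t : ℝ) {h : ℝ} (hh : 0 < h) :
    ∫ x, K ((x - t) / h) / h * F x = ∫ u, K u * F (t + u * h) := by
  have hcomp := integral_comp_add_mul_right (fun x => K ((x - t) / h) * F x) t h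
  simp only [add_sub_cancel_left, mul_div_cancel_right₀ _ hh.ne'] at hcomp
  rw [hcomp, abs_of_pos (inv_pos.mpr hh), smul_eq_mul, ← integral_const_mul]
  simp only [div_eq_inv_mul, mul_assoc]

theorem integral_integral_swap_of_norm_le_mul {α β : Type*} [MeasurableSpace α]
    [MeasurableSpace β] {μ : Measure α} {ν : Measure β} [SFinite μ] [SFinite ν]
    {f : α → β → ℝ} (hf : AEStronglyMeasurable (Function.uncurry f) (μ.prod ν))
    {a : α → ℝ} {b : β → ℝ} (ha : Integrable a μ) (hb : Integrable b ν)
    (hle : ∀ x y, ‖f x y‖ ≤ a x * b y) :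
    ∫ x, ∫ y, f x y ∂ν ∂μ = ∫ y, ∫ x, f x y ∂μ ∂ν :=
  integral_integral_swap <| (ha.mul_prod hb).mono' hf (ae_of_all _ fun p => hle p.1 p.2)

section ConditionalSupport

variable {α : Type*} {m₀ : ℝ → ℝ} {η pS : α → ℝ} {pTS : ℝ → α → ℝ} {𝒮 : ℝ → Set α}

theorem ipw_integrand_eq (hpTS : ∀ t' s, 0 ≤ pTS t' s) (hpS : ∀ s, 0 ≤ pS s)
    (h𝒮 : ∀ t', 𝒮 t' = {s | 0 < pTS t' s * pS s}) (K : ℝ → ℝ) (t h t₁ : ℝ) (s : α) :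
    (m₀ t₁ + η s) * K ((t₁ - t) / h) / (h * pTS t₁ s) * (pTS t₁ s * pS s)
      = K ((t₁ - t) / h) / h * (𝒮 t₁).indicator (fun s => (m₀ t₁ + η s) * pS s) s := by
  classical
  rw [← div_div, div_mul_mul_eq_ite (hpTS t₁ s) (hpS s), Set.indicator_apply, h𝒮]
  simp only [Set.mem_ofPred_eq]
  split_ifs <;> ring

theorem norm_indicator_support_le {M : ℝ} (hpS : ∀ s, 0 ≤ pS s)
    (hM : ∀ c s, ‖m₀ c + η s‖ ≤ M) (c : ℝ) (s : α) :
    ‖(𝒮 c).indicator (fun s => (m₀ c + η s) * pS s) s‖ ≤ M * pS s := by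
  refine norm_indicator_le_norm_self _ _ |>.trans ?_
  rw [norm_mul, Real.norm_of_nonneg (hpS s)]
  exact mul_le_mul_of_nonneg_right (hM c s) (hpS s)

variable [MeasurableSpace α] {μ : Measure α}

theorem norm_integral_indicator_support_le {M : ℝ} (hpS : ∀ s, 0 ≤ pS s)
    (hpS_int : Integrable pS μ) (hM : ∀ c s, ‖m₀ c + η s‖ ≤ M) (c : ℝ) :
    ‖∫ s, (𝒮 c).indicator (fun s => (m₀ c + η s) * pS s) s ∂μ‖ ≤ M * ∫ s, pS s ∂μ := by
  rw [← integral_const_mul]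
  exact norm_integral_le_of_norm_le (hpS_int.const_mul M)
    (ae_of_all _ (norm_indicator_support_le hpS hM c))

theorem measurable_indicator_support_comp (hm : Measurable m₀) (hη : Measurable η)
    (hpTS : Measurable (Function.uncurry pTS)) (hpS : Measurable pS)
    (h𝒮 : ∀ t', 𝒮 t' = {s | 0 < pTS t' s * pS s}) {β : Type*} [MeasurableSpace β]
    {c : β → ℝ} (hc : Measurable c) :
    Measurable fun p : α × β =>
      (𝒮 (c p.2)).indicator (fun s => (m₀ (c p.2) + η s) * pS s) p.1 := by
  have hset : MeasurableSet {p : α × β | 0 < pTS (c p.2) p.1 * pS p.1} :=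
    measurableSet_lt measurable_const
      ((hpTS.comp ((hc.comp measurable_snd).prodMk measurable_fst)).mul (hpS.comp measurable_fst))
  convert (((hm.comp (hc.comp measurable_snd)).add (hη.comp measurable_fst)).mul
    (hpS.comp measurable_fst)).indicator hset using 1
  ext p
  simp [Set.indicator_apply, h𝒮]

theorem ipw_integral_eq_kernel_integral [SFinite μ] {K : ℝ → ℝ} (hK : Integrable K)
    (hm : Measurable m₀) (hη : Measurable η) (hpTS_meas : Measurable (Function.uncurry pTS))
    (hpTS : ∀ t' s, 0 ≤ pTS t' s) (hpS_meas : Measurable pS) (hpS : ∀ s, 0 ≤ pS s)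
    (hpS_int : Integrable pS μ) {M : ℝ} (hM : ∀ c s, ‖m₀ c + η s‖ ≤ M)
    (h𝒮 : ∀ t', 𝒮 t' = {s | 0 < pTS t' s * pS s}) (t : ℝ) {h : ℝ} (hh : 0 < h) :
    ∫ s, (∫ t₁, (m₀ t₁ + η s) * K ((t₁ - t) / h) / (h * pTS t₁ s) * (pTS t₁ s * pS s)) ∂μ
      = ∫ u, K u * ∫ s, (𝒮 (t + u * h)).indicator
          (fun s => (m₀ (t + u * h) + η s) * pS s) s ∂μ := by
  have hmeas := measurable_indicator_support_comp hm hη hpTS_meas hpS_meas h𝒮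
    (by fun_prop : Measurable fun u : ℝ => t + u * h)
  simp_rw [ipw_integrand_eq hpTS hpS h𝒮, integral_kernel_div_mul_eq _ _ t hh,
    ← integral_const_mul]
  refine integral_integral_swap_of_norm_le_mul
    ((hK.aestronglyMeasurable.comp_quasiMeasurePreserving Measure.quasiMeasurePreserving_snd).mul
      hmeas.aestronglyMeasurable) (hpS_int.const_mul M) hK.norm fun s u => ?_
  rw [norm_mul, mul_comm]
  exact mul_le_mul_of_nonneg_right (norm_indicator_support_le hpS hM _ s) (norm_nonneg _)

theorem tendsto_integral_indicator_support (h𝒮 : ∀ c, MeasurableSet (𝒮 c))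
    (hpS : Integrable pS μ) (hηpS : Integrable (fun s => η s * pS s) μ) {ι : Type*}
    {l : Filter ι} {c : ι → ℝ} {t : ℝ} (hm : Tendsto (fun i => m₀ (c i)) l (𝓝 (m₀ t)))
    (hsd : Tendsto (fun i => μ (𝒮 (c i) ∆ 𝒮 t)) l (𝓝 0)) :
    Tendsto (fun i => ∫ s, (𝒮 (c i)).indicator (fun s => (m₀ (c i) + η s) * pS s) s ∂μ) l
      (𝓝 (m₀ t * (∫ s in 𝒮 t, pS s ∂μ) + ∫ s in 𝒮 t, η s * pS s ∂μ)) := by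
  have hsplit : ∀ c', ∫ s, (𝒮 c').indicator (fun s => (m₀ c' + η s) * pS s) s ∂μ
      = m₀ c' * (∫ s in 𝒮 c', pS s ∂μ) + ∫ s in 𝒮 c', η s * pS s ∂μ := fun c' => by
    simp_rw [integral_indicator (h𝒮 c'), add_mul]
    rw [integral_add (hpS.const_mul _).integrableOn hηpS.integrableOn, integral_const_mul]
  simp_rw [hsplit]
  exact (hm.mul (tendsto_setIntegral_of_tendsto_measure_symmDiff hpS (fun i => h𝒮 _) (h𝒮 t)
    hsd)).add (tendsto_setIntegral_of_tendsto_measure_symmDiff hηpS (fun i => h𝒮 _) (h𝒮 t) hsd)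

end ConditionalSupport

theorem ipw_inconsistency_without_positivity_general
    {d : ℕ}
    (m₀ : ℝ → ℝ) (η : (Fin d → ℝ) → ℝ)
    (pTS : ℝ → (Fin d → ℝ) → ℝ) (pS : (Fin d → ℝ) → ℝ)
    (K : ℝ → ℝ) (t : ℝ)
    (hK_int : ∫ u, K u = 1)
    (hm : ContDiff ℝ 2 m₀)
    (hm_bdd : ∃ M, ∀ x, |m₀ x| + |deriv m₀ x| + |iteratedDeriv 2 m₀ x| ≤ M)
    (hη_meas : Measurable η) (hη_bdd : ∃ M, ∀ s, |η s| ≤ M)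
    (hpTS_meas : Measurable (Function.uncurry pTS)) (hpTS_nonneg : ∀ t' s, 0 ≤ pTS t' s)
    (hpS_meas : Measurable pS) (hpS_nonneg : ∀ s, 0 ≤ pS s)
    (hpS_int : ∫ s, pS s = 1)
    (𝒮 : ℝ → Set (Fin d → ℝ))
    (h𝒮 : ∀ t', 𝒮 t' = {s | 0 < pTS t' s * pS s})
    (hsymmdiff : ∀ u : ℝ,
      Tendsto (fun h : ℝ => volume (symmDiff (𝒮 (t + u * h)) (𝒮 t)))
        (nhdsWithin 0 (Set.Ioi 0)) (nhds 0)) :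
    Tendsto
      (fun h : ℝ =>
        ∫ s, ∫ t₁, (m₀ t₁ + η s) * K ((t₁ - t) / h) / (h * pTS t₁ s) * (pTS t₁ s * pS s))
      (nhdsWithin 0 (Set.Ioi 0))
      (nhds (m₀ t * (∫ s in 𝒮 t, pS s) + ∫ s in 𝒮 t, η s * pS s)) := by
  obtain ⟨M, hM⟩ := hm_bdd
  obtain ⟨Mη, hMη⟩ := hη_bdd
  have hbound : ∀ c s, ‖m₀ c + η s‖ ≤ M + Mη := fun c s =>
    (norm_add_le _ _).trans <| add_le_add
      (by rw [Real.norm_eq_abs]; linarith [hM c, abs_nonneg (deriv m₀ c),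
        abs_nonneg (iteratedDeriv 2 m₀ c)]) (hMη s)
  -- a non-integrable function has integral `0`
  have hKi : Integrable K := .of_integral_ne_zero (by simp [hK_int])
  have hpSi : Integrable pS := .of_integral_ne_zero (by simp [hpS_int])
  have hm_meas : Measurable m₀ := hm.continuous.measurable
  have hηpS : Integrable fun s => η s * pS s :=
    hpSi.bdd_mul hη_meas.aestronglyMeasurable (ae_of_all _ hMη)
  have h𝒮_meas : ∀ c, MeasurableSet (𝒮 c) := fun c => h𝒮 c ▸
    measurableSet_lt measurable_const ((hpTS_meas.comp measurable_prodMk_left).mul hpS_meas)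
  have hlim : ∀ u : ℝ, Tendsto (fun h => ∫ s, (𝒮 (t + u * h)).indicator
      (fun s => (m₀ (t + u * h) + η s) * pS s) s) (𝓝[>] 0) (𝓝 _) := fun u =>
    tendsto_integral_indicator_support h𝒮_meas hpSi hηpS
      (hm.continuous.tendsto _ |>.comp <| tendsto_nhdsWithin_of_tendsto_nhds <|
        Continuous.tendsto' (by fun_prop) 0 t (by simp)) (hsymmdiff u)
  have hdct := tendsto_integral_smul_of_tendsto_of_bounded hKi (M := M + Mη)
    (Eventually.of_forall fun h =>
      (measurable_indicator_support_comp hm_meas hη_meas hpTS_meas hpS_meas h𝒮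
        (by fun_prop : Measurable fun u : ℝ => t + u * h)).stronglyMeasurable
        |>.integral_prod_left'.aestronglyMeasurable)
    (Eventually.of_forall fun h => ae_of_all _ fun u => by
      simpa [hpS_int] using norm_integral_indicator_support_le hpS_nonneg hpSi hbound _)
    (ae_of_all _ hlim)
  rw [hK_int, one_smul] at hdct
  refine hdct.congr' ?_
  filter_upwards [self_mem_nhdsWithin] with h hh
  exact (ipw_integral_eq_kernel_integral hKi hm_meas hη_meas hpTS_meas
    hpTS_nonneg hpS_meas hpS_nonneg hpSi hbound h𝒮 t hh).symm

/-- Inconsistency of the IPW estimator without positivity.  Under the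
additive confounding model `Y = m₀(T) + η(S) + ε` (with `E[ε | T,S] = 0`, so that the
oracle IPW expectation is the double integral below against the joint density
`p(t₁,s) = p_{T|S}(t₁|s) p_S(s)`), with a symmetric kernel `K` supported on `[-1,1]`,
`m₀ ∈ C²` with bounded derivatives, bounded `η`, and conditional supports
`𝒮(t') = {s : p_{T|S}(t'|s) p_S(s) > 0}` whose symmetric differences
`𝒮(t+uh) ∆ 𝒮(t)` have Lebesgue measure tending to `0` as `h → 0⁺`, the oracle IPW
functional `E[Y K((T−t)/h)/(h p_{T|S}(T|S))]` converges as `h → 0⁺` to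
`m₀(t) ρ(t) + ω(t)` where `ρ(t) = P(S ∈ 𝒮(t)) = ∫_{𝒮(t)} p_S` and
`ω(t) = E[η(S) 1{S ∈ 𝒮(t)}]` — hence the IPW estimator of `m(t)` is inconsistent
whenever this limit differs from `m(t)`. -/
theorem ipw_inconsistency_without_positivity
    {d : ℕ}
    (m₀ : ℝ → ℝ) (η : (Fin d → ℝ) → ℝ)
    (pTS : ℝ → (Fin d → ℝ) → ℝ) (pS : (Fin d → ℝ) → ℝ)
    (K : ℝ → ℝ) (t : ℝ)
    (hK_meas : Measurable K) (hK_nonneg : ∀ u, 0 ≤ K u)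
    (hK_bdd : ∃ C, ∀ u, K u ≤ C)
    (hK_symm : ∀ u, K u = K (-u)) (hK_supp : ∀ u, 1 < |u| → K u = 0)
    (hK_int : ∫ u, K u = 1)
    (hm : ContDiff ℝ 2 m₀)
    (hm_bdd : ∃ M, ∀ x, |m₀ x| + |deriv m₀ x| + |iteratedDeriv 2 m₀ x| ≤ M)
    (hη_meas : Measurable η) (hη_bdd : ∃ M, ∀ s, |η s| ≤ M)
    (hpTS_meas : Measurable (Function.uncurry pTS)) (hpTS_nonneg : ∀ t' s, 0 ≤ pTS t' s)
    (hpS_meas : Measurable pS) (hpS_nonneg : ∀ s, 0 ≤ pS s)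
    (hpS_int : ∫ s, pS s = 1)
    (𝒮 : ℝ → Set (Fin d → ℝ))
    (h𝒮 : ∀ t', 𝒮 t' = {s | 0 < pTS t' s * pS s})
    (hsymmdiff : ∀ u : ℝ,
      Tendsto (fun h : ℝ => volume (symmDiff (𝒮 (t + u * h)) (𝒮 t)))
        (nhdsWithin 0 (Set.Ioi 0)) (nhds 0)) :
    Tendsto
      (fun h : ℝ =>
        ∫ s, ∫ t₁, (m₀ t₁ + η s) * K ((t₁ - t) / h) / (h * pTS t₁ s) * (pTS t₁ s * pS s))
      (nhdsWithin 0 (Set.Ioi 0))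
      (nhds (m₀ t * (∫ s in 𝒮 t, pS s) + ∫ s in 𝒮 t, η s * pS s)) :=
  ipw_inconsistency_without_positivity_general m₀ η pTS pS K t hK_int hm hm_bdd hη_meas hη_bdd
    hpTS_meas hpTS_nonneg hpS_meas hpS_nonneg hpS_int 𝒮 h𝒮 hsymmdiff
end

section
/- Under the additive confounding model Y = m̄(T) + η(S) + ε with m̄ four times continuously differentiable with bounded derivatives, E[ε|T,S]=0, and the ζ-interior conditional density p_ζ(·|t) supported in 𝒮(t)⊖ζ ⊂ 𝒮(t+δ) for all |δ| ≤ h (with ∫ p_ζ(s|t) ds = 1), the bias-corrected IPW functional satisfies E[ Y·((T−t)/h)·K((T−t)/h)·p_ζ(S|t) / (h²·κ₂·p(T,S)) ] = m̄'(t) + (h²κ₄/(6κ₂))·m̄'''(t) + O(h³), where K is a symmetric second-order kernel supported on [-1,1], κ_j = ∫u^jK(u)du, and p(t,s) is the joint density of (T,S). -/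
/-!
Where `p_ζ(s|t) ≠ 0` the density `p(t₁, s)` is positive for `|t₁ - t| ≤ h`, which is all the
kernel sees, so the inverse weighting cancels exactly. Substituting `t₁ = t + h u`, the functional
becomes `(h κ₂)⁻¹ ∫ m₀(t + h u) u K(u) du`: `p_ζ` integrates to one and `η(S)` only multiplies
the first moment of `K`, which vanishes by symmetry. Expanding `m₀` to third order at `t`, symmetry
kills the even-order terms and the fourth-order remainder contributes `M h⁴ κ₄`.
-/

open MeasureTheory Set Function

theorem abs_le_mul_abs_sub_pow_succ_of_abs_deriv_le {ψ : ℝ → ℝ} {t C : ℝ} {k : ℕ}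
    (hψ : Differentiable ℝ ψ) (hψt : ψ t = 0) (hC : 0 ≤ C)
    (hderiv : ∀ x, |deriv ψ x| ≤ C * |x - t| ^ k) (x : ℝ) :
    |ψ x| ≤ C * |x - t| ^ (k + 1) := by
  have hmvt : ‖ψ x - ψ t‖ ≤ C * |x - t| ^ k * ‖x - t‖ :=
    (convex_uIcc t x).norm_image_sub_le_of_norm_deriv_le (fun y _ => hψ y)
      (fun y hy => (hderiv y).trans <| by gcongr C * ?_ ^ k; exact abs_sub_left_of_mem_uIcc hy)
      left_mem_uIcc right_mem_uIcc
  simpa [hψt, pow_succ, mul_assoc] using hmvt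

open Finset Nat in
theorem abs_sub_taylor_le_of_abs_iteratedDeriv_le {n : ℕ} {f : ℝ → ℝ} {t M : ℝ}
    (hf : ContDiff ℝ n f) (hM : ∀ x, |iteratedDeriv n f x| ≤ M) (x : ℝ) :
    |f x - ∑ i ∈ range n, iteratedDeriv i f t / i ! * (x - t) ^ i| ≤ M * |x - t| ^ n := by
  induction n generalizing f x with
  | zero => simpa using hM x
  | succ n ih =>
    have hf' : ContDiff ℝ n (deriv f) := hf.deriv'
    have hM0 : 0 ≤ M := (abs_nonneg _).trans (hM t)
    have hderiv : ∀ y, HasDerivAt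
        (fun x => f x - ∑ i ∈ range (n + 1), iteratedDeriv i f t / i ! * (x - t) ^ i)
        (deriv f y - ∑ i ∈ range n, iteratedDeriv i (deriv f) t / i ! * (y - t) ^ i) y := by
      intro y
      simp only [sum_range_succ', iteratedDeriv_succ', pow_zero, mul_one]
      have hterm : ∀ i, HasDerivAt
          (fun x => iteratedDeriv i (deriv f) t / (i + 1)! * (x - t) ^ (i + 1))
          (iteratedDeriv i (deriv f) t / i ! * (y - t) ^ i) y := by
        intro i
        refine ((((hasDerivAt_id y).sub_const t).pow (i + 1)).const_mul
          (iteratedDeriv i (deriv f) t / (i + 1)!)).congr_deriv ?_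
        rw [factorial_succ]
        push_cast
        field_simp
        simp
      exact ((hf.differentiable (by simp)).differentiableAt.hasDerivAt).sub
        ((HasDerivAt.fun_sum fun i _ => hterm i).add_const _)
    refine abs_le_mul_abs_sub_pow_succ_of_abs_deriv_le (fun y => (hderiv y).differentiableAt)
      (by simp [sum_range_succ']) hM0 (fun y => ?_) x
    rw [(hderiv y).deriv]
    exact ih hf' (fun y => by rw [← iteratedDeriv_succ']; exact hM y) y

theorem MeasureTheory.Integrable.continuous_mul_of_support_subset {X : Type*} [TopologicalSpace X]
    [T2Space X] [MeasurableSpace X] [OpensMeasurableSpace X] {μ : Measure X} {f g : X → ℝ}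
    {s : Set X} (hf : Integrable f μ) (hs : IsCompact s) (hfs : support f ⊆ s)
    (hg : Continuous g) : Integrable (fun x => g x * f x) μ :=
  (integrableOn_iff_integrable_of_support_subset
    ((support_mul_subset_right g f).trans hfs)).1
    (hf.integrableOn.continuousOn_mul hg.continuousOn hs)

theorem integral_eq_zero_of_odd {f : ℝ → ℝ} (hf : ∀ x, f (-x) = -f x) : ∫ x, f x = 0 := by
  have h := integral_neg_eq_self f volume
  simp only [hf, integral_neg] at h
  linarith

theorem integral_comp_sub_div (g : ℝ → ℝ) (t : ℝ) {h : ℝ} (hh : 0 < h) :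
    ∫ x, g ((x - t) / h) = h * ∫ u, g u := by
  rw [integral_sub_right_eq_self (fun x => g (x / h)) t, Measure.integral_comp_div,
    abs_of_pos hh, smul_eq_mul]

theorem integral_pow_mul_eq_zero_of_odd {K : ℝ → ℝ} (hK : ∀ u, K u = K (-u)) {j : ℕ}
    (hj : Odd j) : ∫ u, u ^ j * K u = 0 :=
  integral_eq_zero_of_odd fun u => by rw [hj.neg_pow, ← hK, neg_mul]

theorem support_subset_Icc_of_eq_zero_of_one_lt_abs {K : ℝ → ℝ}
    (hK_supp : ∀ u, 1 < |u| → K u = 0) : support K ⊆ Icc (-1) 1 := fun u hu =>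
  abs_le.1 (not_lt.1 fun h => hu (hK_supp u h))

theorem integrable_pow_mul_kernel {K : ℝ → ℝ} (hK : Integrable K)
    (hK_supp : ∀ u, 1 < |u| → K u = 0) (j : ℕ) : Integrable (fun u => u ^ j * K u) :=
  hK.continuous_mul_of_support_subset isCompact_Icc
    (support_subset_Icc_of_eq_zero_of_one_lt_abs hK_supp) (continuous_pow j)

theorem integrable_mul_mul_kernel {g K : ℝ → ℝ} (hg : Continuous g) (hK : Integrable K)
    (hK_supp : ∀ u, 1 < |u| → K u = 0) : Integrable (fun u => g u * u * K u) :=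
  hK.continuous_mul_of_support_subset isCompact_Icc
    (support_subset_Icc_of_eq_zero_of_one_lt_abs hK_supp) (by fun_prop)

open Finset Nat in
theorem integral_taylor_comp_mul_kernel {f K : ℝ → ℝ} {t h : ℝ} (hK : Integrable K)
    (hK_symm : ∀ u, K u = K (-u)) (hK_supp : ∀ u, 1 < |u| → K u = 0) :
    ∫ u, (∑ i ∈ range 4, iteratedDeriv i f t / i ! * (h * u) ^ i) * u * K u =
      h * deriv f t * (∫ u, u ^ 2 * K u) + h ^ 3 * iteratedDeriv 3 f t / 6 * ∫ u, u ^ 4 * K u := by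
  have hexpand : ∀ u, (∑ i ∈ range 4, iteratedDeriv i f t / i ! * (h * u) ^ i) * u * K u
      = ∑ i ∈ range 4, iteratedDeriv i f t / i ! * h ^ i * (u ^ (i + 1) * K u) := fun u => by
    rw [sum_mul, sum_mul]
    exact sum_congr rfl fun i _ => by ring
  simp_rw [hexpand]
  rw [integral_finsetSum _ fun i _ => (integrable_pow_mul_kernel hK hK_supp _).const_mul _]
  simp only [integral_const_mul, sum_range_succ, sum_range_zero,
    integral_pow_mul_eq_zero_of_odd hK_symm (by decide : Odd 1),
    integral_pow_mul_eq_zero_of_odd hK_symm (by decide : Odd 3), iteratedDeriv_one, factorial]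
  push_cast
  ring

open Finset Nat in
theorem abs_integral_comp_mul_kernel_sub_le {f K : ℝ → ℝ} {t h M : ℝ} (hf : ContDiff ℝ 4 f)
    (hM : ∀ x, |iteratedDeriv 4 f x| ≤ M) (hK : Integrable K) (hK_nonneg : ∀ u, 0 ≤ K u)
    (hK_symm : ∀ u, K u = K (-u)) (hK_supp : ∀ u, 1 < |u| → K u = 0) :
    |(∫ u, f (t + h * u) * u * K u) -
        (h * deriv f t * (∫ u, u ^ 2 * K u) + h ^ 3 * iteratedDeriv 3 f t / 6 * ∫ u, u ^ 4 * K u)|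
      ≤ M * h ^ 4 * ∫ u, u ^ 4 * K u := by
  set P : ℝ → ℝ := fun u => ∑ i ∈ range 4, iteratedDeriv i f t / i ! * (h * u) ^ i
  have hM0 : 0 ≤ M := (abs_nonneg _).trans (hM t)
  have hremainder (u : ℝ) :
      ‖(f (t + h * u) - P u) * u * K u‖ ≤ M * h ^ 4 * (u ^ 4 * K u) := by
    rcases le_or_gt |u| 1 with hu | hu
    · have htaylor := abs_sub_taylor_le_of_abs_iteratedDeriv_le hf hM (t + h * u) (t := t)
      rw [add_sub_cancel_left, abs_mul, mul_pow, pow_abs, pow_abs, abs_of_nonneg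
        (by positivity : 0 ≤ h ^ 4), abs_of_nonneg (by positivity : 0 ≤ u ^ 4)] at htaylor
      rw [Real.norm_eq_abs, abs_mul, abs_mul, abs_of_nonneg (hK_nonneg u)]
      calc |f (t + h * u) - P u| * |u| * K u ≤ M * (h ^ 4 * u ^ 4) * 1 * K u := by
            gcongr
            exact hK_nonneg u
      _ = M * h ^ 4 * (u ^ 4 * K u) := by ring
    · simp [hK_supp u hu]
  rw [← integral_taylor_comp_mul_kernel (f := f) hK hK_symm hK_supp,
    ← integral_sub (integrable_mul_mul_kernel (g := fun u => f (t + h * u))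
      (hf.continuous.comp (by fun_prop)) hK hK_supp)
      (integrable_mul_mul_kernel (g := P) (by fun_prop) hK hK_supp),
    ← integral_const_mul, ← Real.norm_eq_abs]
  refine norm_integral_le_of_norm_le ((integrable_pow_mul_kernel hK hK_supp 4).const_mul _)
    (ae_of_all _ fun u => ?_)
  simpa only [sub_mul] using hremainder u

theorem integral_add_const_mul_kernel {g K : ℝ → ℝ} (c : ℝ) (hg : Continuous g)
    (hK : Integrable K) (hK_symm : ∀ u, K u = K (-u)) (hK_supp : ∀ u, 1 < |u| → K u = 0) :
    ∫ u, (g u + c) * u * K u = ∫ u, g u * u * K u := by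
  have hsplit : ∀ u, (g u + c) * u * K u = g u * u * K u + c * (u ^ 1 * K u) := fun u => by ring
  simp_rw [hsplit]
  rw [integral_add (integrable_mul_mul_kernel hg hK hK_supp)
      ((integrable_pow_mul_kernel hK hK_supp 1).const_mul c),
    integral_const_mul, integral_pow_mul_eq_zero_of_odd hK_symm odd_one, mul_zero, add_zero]

theorem integral_kernel_div_weight_mul_weight {g K w : ℝ → ℝ} {t h c κ : ℝ} (hh : 0 < h)
    (hK_supp : ∀ u, 1 < |u| → K u = 0) (hw : c ≠ 0 → ∀ x, |x - t| ≤ h → w x ≠ 0) :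
    ∫ x, g x * ((x - t) / h) * K ((x - t) / h) * c / (h ^ 2 * κ * w x) * w x =
      c * ((∫ u, g (t + h * u) * u * K u) / (h * κ)) := by
  by_cases hc : c = 0
  · simp [hc]
  have hcancel : ∀ x, g x * ((x - t) / h) * K ((x - t) / h) * c / (h ^ 2 * κ * w x) * w x =
      (fun u => g (t + h * u) * u * K u) ((x - t) / h) * (c / h ^ 2 / κ) := fun x => by
    beta_reduce
    rw [show t + h * ((x - t) / h) = x by field_simp; ring]
    by_cases hKx : K ((x - t) / h) = 0
    · simp [hKx]
    have hx : |x - t| ≤ h := by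
      have := not_lt.1 fun h1 => hKx (hK_supp _ h1)
      rwa [abs_div, abs_of_pos hh, div_le_one hh] at this
    have := hw hc x hx
    field_simp
  rw [integral_congr_ae (ae_of_all _ hcancel), integral_mul_const,
    integral_comp_sub_div (fun u => g (t + h * u) * u * K u) t hh]
  field_simp

theorem bias_corrected_ipw_expansion_general
    {d : ℕ}
    (m₀ : ℝ → ℝ) (η : (Fin d → ℝ) → ℝ)
    (p : ℝ → (Fin d → ℝ) → ℝ)
    (pζ : (Fin d → ℝ) → ℝ)
    (K : ℝ → ℝ) (t h₀ : ℝ)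
    (hK_nonneg : ∀ u, 0 ≤ K u)
    (hK_symm : ∀ u, K u = K (-u)) (hK_supp : ∀ u, 1 < |u| → K u = 0)
    (hK_int : ∫ u, K u = 1)
    (hκ₂ : 0 < ∫ u, u ^ 2 * K u)
    (hm : ContDiff ℝ 4 m₀)
    (hm_bdd : ∃ M, ∀ x, ∀ i ≤ 4, |iteratedDeriv i m₀ x| ≤ M)
    (hpζ_int : ∫ s, pζ s = 1)
    (hpζ_supp : ∀ δ : ℝ, |δ| ≤ h₀ → ∀ s, pζ s ≠ 0 → 0 < p (t + δ) s) :
    ∃ C : ℝ, ∀ h : ℝ, 0 < h → h ≤ h₀ →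
      |(∫ s, ∫ t₁, (m₀ t₁ + η s) * ((t₁ - t) / h) * K ((t₁ - t) / h) * pζ s /
            (h ^ 2 * (∫ u, u ^ 2 * K u) * p t₁ s) * p t₁ s) -
          (deriv m₀ t +
            h ^ 2 * (∫ u, u ^ 4 * K u) / (6 * ∫ u, u ^ 2 * K u) * iteratedDeriv 3 m₀ t)| ≤
        C * h ^ 3 := by
  obtain ⟨M, hM⟩ := hm_bdd
  have hK : Integrable K := .of_integral_ne_zero (by rw [hK_int]; exact one_ne_zero)
  set κ₂ := ∫ u, u ^ 2 * K u
  set κ₄ := ∫ u, u ^ 4 * K u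
  refine ⟨M * κ₄ / κ₂, fun h hh hh₀' => ?_⟩
  set J := ∫ u, m₀ (t + h * u) * u * K u
  have hinner : ∀ s, ∫ t₁, (m₀ t₁ + η s) * ((t₁ - t) / h) * K ((t₁ - t) / h) * pζ s /
      (h ^ 2 * κ₂ * p t₁ s) * p t₁ s = pζ s * (J / (h * κ₂)) := fun s => by
    rw [integral_kernel_div_weight_mul_weight hh hK_supp fun hs x hx => by
        simpa using (hpζ_supp (x - t) (hx.trans hh₀') s hs).ne',
      integral_add_const_mul_kernel (η s) (by fun_prop) hK hK_symm hK_supp]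
  rw [integral_congr_ae (ae_of_all _ hinner), integral_mul_const, hpζ_int, one_mul]
  have hJ : |J - (h * deriv m₀ t * κ₂ + h ^ 3 * iteratedDeriv 3 m₀ t / 6 * κ₄)|
      ≤ M * h ^ 4 * κ₄ :=
    abs_integral_comp_mul_kernel_sub_le hm (fun x => hM x 4 le_rfl) hK hK_nonneg hK_symm hK_supp
  calc |J / (h * κ₂) - (deriv m₀ t + h ^ 2 * κ₄ / (6 * κ₂) * iteratedDeriv 3 m₀ t)|
      = |J - (h * deriv m₀ t * κ₂ + h ^ 3 * iteratedDeriv 3 m₀ t / 6 * κ₄)| / (h * κ₂) := by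
        have hexpand : J / (h * κ₂) - (deriv m₀ t + h ^ 2 * κ₄ / (6 * κ₂) * iteratedDeriv 3 m₀ t)
            = (J - (h * deriv m₀ t * κ₂ + h ^ 3 * iteratedDeriv 3 m₀ t / 6 * κ₄)) / (h * κ₂) := by
          field_simp
        rw [hexpand, abs_div, abs_of_pos (mul_pos hh hκ₂)]
    _ ≤ M * h ^ 4 * κ₄ / (h * κ₂) := by gcongr
    _ = M * κ₄ / κ₂ * h ^ 3 := by field_simp

/-- Bias-corrected IPW expansion without positivity.  Under the additive
confounding model `Y = m₀(T) + η(S) + ε` with `m₀ ∈ C⁴` with bounded derivatives,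
bounded `η`, `E[ε|T,S] = 0` (so the expectation of the modified IPW quantity equals the
double integral below against the joint density `p(t₁,s)`), a symmetric second-order
kernel `K` supported on `[-1,1]`, and a `ζ`-interior conditional density `p_ζ(·|t)`
(a probability density whose support is contained in `𝒮(t+δ) = {s : p(t+δ,s) > 0}` for
all `|δ| ≤ h₀`), the bias-corrected IPW functional
`E[Y ((T−t)/h) K((T−t)/h) p_ζ(S|t)/(h² κ₂ p(T,S))]` equals
`m₀'(t) + (h² κ₄/(6κ₂)) m₀'''(t) + O(h³)` for all bandwidths `0 < h ≤ h₀`. -/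
theorem bias_corrected_ipw_expansion
    {d : ℕ}
    (m₀ : ℝ → ℝ) (η : (Fin d → ℝ) → ℝ)
    (p : ℝ → (Fin d → ℝ) → ℝ)
    (pζ : (Fin d → ℝ) → ℝ)
    (K : ℝ → ℝ) (t h₀ : ℝ) (hh₀ : 0 < h₀)
    (hK_meas : Measurable K) (hK_nonneg : ∀ u, 0 ≤ K u)
    (hK_bdd : ∃ C, ∀ u, K u ≤ C)
    (hK_symm : ∀ u, K u = K (-u)) (hK_supp : ∀ u, 1 < |u| → K u = 0)
    (hK_int : ∫ u, K u = 1)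
    (hκ₂ : 0 < ∫ u, u ^ 2 * K u)
    (hm : ContDiff ℝ 4 m₀)
    (hm_bdd : ∃ M, ∀ x, ∀ i ≤ 4, |iteratedDeriv i m₀ x| ≤ M)
    (hη_meas : Measurable η) (hη_bdd : ∃ M, ∀ s, |η s| ≤ M)
    (hp_meas : Measurable (Function.uncurry p)) (hp_nonneg : ∀ t' s, 0 ≤ p t' s)
    (hpζ_meas : Measurable pζ) (hpζ_nonneg : ∀ s, 0 ≤ pζ s)
    (hpζ_int : ∫ s, pζ s = 1)
    (hpζ_supp : ∀ δ : ℝ, |δ| ≤ h₀ → ∀ s, pζ s ≠ 0 → 0 < p (t + δ) s) :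
    ∃ C : ℝ, ∀ h : ℝ, 0 < h → h ≤ h₀ →
      |(∫ s, ∫ t₁, (m₀ t₁ + η s) * ((t₁ - t) / h) * K ((t₁ - t) / h) * pζ s /
            (h ^ 2 * (∫ u, u ^ 2 * K u) * p t₁ s) * p t₁ s) -
          (deriv m₀ t +
            h ^ 2 * (∫ u, u ^ 4 * K u) / (6 * ∫ u, u ^ 2 * K u) * iteratedDeriv 3 m₀ t)| ≤
        C * h ^ 3 :=
  bias_corrected_ipw_expansion_general m₀ η p pζ K t h₀ hK_nonneg hK_symm hK_supp hK_int hκ₂ hm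
    hm_bdd hpζ_int hpζ_supp
end
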